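/- Let ρ_n, π_n be states on a bipartite space with (ρ_n + (K−1)π_n)/K separable, and define the measure-and-prepare map Λ(A) = tr(A Φ(K)) ρ_n + tr(A (Id − Φ(K))) π_n on states of C^K ⊗ C^K. Then Λ is CPTP and for every separable input state σ, R_G(Λ(σ)) ≤ 1/(K−1). -/

import Mathlib

open Matrix Kronecker ComplexOrder

noncomputable section

def IsState {n : Type*} [Fintype n] (ρ : Matrix n n ℂ) : Prop :=
  ρ.PosSemidef ∧ ρ.trace = 1

def SepState {α β : Type*} [Fintype α] [Fintype β]
    (σ : Matrix (α × β) (α × β) ℂ) : Prop :=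
  ∃ (k : ℕ) (p : Fin k → ℝ) (A : Fin k → Matrix α α ℂ) (B : Fin k → Matrix β β ℂ),
    (∀ i, 0 ≤ p i) ∧ (∑ i, p i = 1) ∧ (∀ i, IsState (A i)) ∧ (∀ i, IsState (B i)) ∧
    σ = ∑ i, (p i : ℂ) • (A i ⊗ₖ B i)

/-- Global robustness of entanglement. -/
def RG {α β : Type*} [Fintype α] [Fintype β] (ρ : Matrix (α × β) (α × β) ℂ) : ℝ :=
  sInf {s : ℝ | 0 ≤ s ∧ ∃ π : Matrix (α × β) (α × β) ℂ, IsState π ∧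
    SepState ((((1 + s)⁻¹ : ℝ) : ℂ) • (ρ + (s : ℂ) • π))}

/-- Log-global robustness (log base 2). -/
def LRG {α β : Type*} [Fintype α] [Fintype β] (ρ : Matrix (α × β) (α × β) ℂ) : ℝ :=
  Real.logb 2 (1 + RG ρ)

/-- Matrix logarithm (base 2) of a Hermitian matrix, via the spectral decomposition. -/
def matLog {n : Type*} [Fintype n] [DecidableEq n] (A : Matrix n n ℂ) : Matrix n n ℂ :=
  if hA : A.IsHermitian then
    (hA.eigenvectorUnitary : Matrix n n ℂ) *
      Matrix.diagonal (fun i => (Real.logb 2 (hA.eigenvalues i) : ℂ)) *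
      (star hA.eigenvectorUnitary : Matrix n n ℂ)
  else 0

/-- Quantum relative entropy S(ρ‖σ) = tr ρ (log ρ − log σ). -/
def relEnt {n : Type*} [Fintype n] [DecidableEq n] (ρ σ : Matrix n n ℂ) : ℝ :=
  ((ρ * (matLog ρ - matLog σ)).trace).re

/-- Relative entropy of entanglement. -/
def ER {α β : Type*} [Fintype α] [Fintype β] [DecidableEq α] [DecidableEq β]
    (ρ : Matrix (α × β) (α × β) ℂ) : ℝ :=
  sInf {x : ℝ | ∃ σ, IsState σ ∧ SepState σ ∧ x = relEnt ρ σ}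

/-- CPTP maps, presented by Kraus operators. -/
def IsCPTP {n m : Type*} [Fintype n] [DecidableEq n] [Fintype m] [DecidableEq m]
    (Λ : Matrix n n ℂ →ₗ[ℂ] Matrix m m ℂ) : Prop :=
  ∃ (k : ℕ) (K : Fin k → Matrix m n ℂ),
    (∀ X, Λ X = ∑ i, K i * X * (K i)ᴴ) ∧ (∑ i, (K i)ᴴ * K i = 1)

/-- Maximally entangled state on α ⊗ α. -/
def maxEnt (α : Type*) [Fintype α] [DecidableEq α] : Matrix (α × α) (α × α) ℂ :=
  Matrix.of fun p q => if p.1 = p.2 ∧ q.1 = q.2 then ((Fintype.card α : ℂ))⁻¹ else 0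

/-- Trace of the positive part of a Hermitian matrix. -/
def trPos {n : Type*} [Fintype n] [DecidableEq n] (A : Matrix n n ℂ) : ℝ :=
  if hA : A.IsHermitian then ∑ i, max (hA.eigenvalues i) 0 else 0

/-- Trace norm. -/
def traceNorm {n : Type*} [Fintype n] [DecidableEq n] (A : Matrix n n ℂ) : ℝ :=
  ∑ i, Real.sqrt ((Matrix.posSemidef_conjTranspose_mul_self A).1.eigenvalues i)

/-!
`Λ` is a measure-and-prepare channel for the projective measurement `{Φ, 1 - Φ}`: writing
`ρ = S Sᴴ`, the matrices `S |l⟩⟨j| P` are Kraus operators of `A ↦ tr(P A P) • ρ`.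
For separable `σ` the weight `r = tr(σ Φ)` lies in `[0, 1/K]`, because
`tr((A ⊗ B) Φ) = tr(A Bᵀ) / K` and `tr(X Y) ≤ tr X · tr Y` for positive semidefinite `X, Y`
(submultiplicativity of the Frobenius norm). So `Λ σ = r ρ + (1 - r) π`, and mixing it with the
state `(1 - (K - 1) r) ρ + (K - 1) r π` in the ratio `1 : 1/(K - 1)` gives the separable state
`(ρ + (K - 1) π) / K`.
-/

lemma Matrix.PosSemidef.exists_eq_conjTranspose_mul_self {n : Type*} [Fintype n]
    {A : Matrix n n ℂ} (hA : A.PosSemidef) : ∃ B : Matrix n n ℂ, A = Bᴴ * B := by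
  classical
  open scoped MatrixOrder in
  exact CStarAlgebra.nonneg_iff_eq_star_mul_self.mp hA.nonneg

lemma IsState.exists_mul_conjTranspose_eq {m : Type*} [Fintype m] {ρ : Matrix m m ℂ}
    (hρ : IsState ρ) :
    ∃ S : Matrix m m ℂ, S * Sᴴ = ρ ∧ (Sᴴ * S).trace = 1 := by
  obtain ⟨C, rfl⟩ := hρ.1.exists_eq_conjTranspose_mul_self
  refine ⟨Cᴴ, by rw [conjTranspose_conjTranspose], ?_⟩
  rw [conjTranspose_conjTranspose, trace_mul_comm, hρ.2]

section Frobenius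

attribute [local instance] Matrix.frobeniusNormedAddCommGroup

variable {m n : Type*} [Fintype m] [Fintype n]

lemma trace_conjTranspose_mul_self_eq_frobenius_sq (M : Matrix m n ℂ) :
    (Mᴴ * M).trace = ((‖M‖ ^ 2 : ℝ) : ℂ) := by
  rw [frobenius_norm_def, ← Real.sqrt_eq_rpow, Real.sq_sqrt (by positivity)]
  simp only [trace, diag, mul_apply, conjTranspose_apply, Real.rpow_two]
  push_cast
  rw [Finset.sum_comm]
  exact Finset.sum_congr rfl fun i _ => Finset.sum_congr rfl fun j _ => Complex.conj_mul' _

lemma Matrix.PosSemidef.trace_mul_nonneg_and_le {X Y : Matrix n n ℂ} (hX : X.PosSemidef)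
    (hY : Y.PosSemidef) : 0 ≤ (X * Y).trace ∧ (X * Y).trace ≤ X.trace * Y.trace := by
  obtain ⟨M, rfl⟩ := hX.exists_eq_conjTranspose_mul_self
  obtain ⟨N, rfl⟩ := hY.exists_eq_conjTranspose_mul_self
  have hMN : (Mᴴ * M * (Nᴴ * N)).trace = ((N * Mᴴ)ᴴ * (N * Mᴴ)).trace := by
    rw [Matrix.mul_assoc, trace_mul_comm, conjTranspose_mul, conjTranspose_conjTranspose]
    simp only [Matrix.mul_assoc]
  simp only [hMN, trace_conjTranspose_mul_self_eq_frobenius_sq, ← Complex.ofReal_mul,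
    Complex.zero_le_real, Complex.real_le_real]
  refine ⟨by positivity, ?_⟩
  calc ‖N * Mᴴ‖ ^ 2 ≤ (‖N‖ * ‖Mᴴ‖) ^ 2 := by gcongr; exact frobenius_norm_mul _ _
    _ = ‖M‖ ^ 2 * ‖N‖ ^ 2 := by rw [frobenius_norm_conjTranspose]; ring

end Frobenius

section MaxEnt

variable {α : Type*} [Fintype α] [DecidableEq α]

lemma maxEnt_isHermitian (α : Type*) [Fintype α] [DecidableEq α] : (maxEnt α).IsHermitian := by
  ext p q
  simp only [conjTranspose_apply, maxEnt, of_apply, and_comm]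
  split_ifs <;> simp

lemma maxEnt_mul_self (α : Type*) [Fintype α] [DecidableEq α] :
    maxEnt α * maxEnt α = maxEnt α := by
  ext p q
  have : Nonempty α := ⟨p.1⟩
  simp only [mul_apply, maxEnt, of_apply, Fintype.sum_prod_type, ite_mul, zero_mul, mul_ite,
    mul_zero]
  by_cases hp : p.1 = p.2 <;> by_cases hq : q.1 = q.2 <;> simp [hp, hq, Finset.sum_ite_eq]

lemma trace_kronecker_mul_maxEnt (A B : Matrix α α ℂ) :
    ((A ⊗ₖ B) * maxEnt α).trace = (Fintype.card α : ℂ)⁻¹ * (A * Bᵀ).trace := by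
  simp only [trace, diag, mul_apply, maxEnt, of_apply, Fintype.sum_prod_type,
    kroneckerMap_apply, transpose_apply, mul_ite, mul_zero, ite_and, Finset.sum_ite_eq,
    Finset.mem_univ, if_true, Finset.mul_sum]
  rw [Finset.sum_comm]
  simp [mul_comm]

lemma IsState.trace_kronecker_mul_maxEnt_nonneg_and_le {A B : Matrix α α ℂ} (hA : IsState A)
    (hB : IsState B) :
    0 ≤ ((A ⊗ₖ B) * maxEnt α).trace ∧
      ((A ⊗ₖ B) * maxEnt α).trace ≤ (Fintype.card α : ℂ)⁻¹ := by
  obtain ⟨h0, h1⟩ := hA.1.trace_mul_nonneg_and_le hB.1.transpose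
  rw [trace_transpose, hA.2, hB.2, one_mul] at h1
  have hc : 0 ≤ (Fintype.card α : ℂ)⁻¹ := by
    rw [← Complex.ofReal_natCast, ← Complex.ofReal_inv, Complex.zero_le_real]
    positivity
  rw [trace_kronecker_mul_maxEnt]
  exact ⟨mul_nonneg hc h0, mul_le_of_le_one_right hc h1⟩

lemma SepState.trace_mul_maxEnt_nonneg_and_le {σ : Matrix (α × α) (α × α) ℂ}
    (hσ : SepState σ) :
    0 ≤ (σ * maxEnt α).trace ∧ (σ * maxEnt α).trace ≤ (Fintype.card α : ℂ)⁻¹ := by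
  obtain ⟨k, p, A, B, hp0, hp1, hA, hB, rfl⟩ := hσ
  have hp0 : ∀ i, 0 ≤ (p i : ℂ) := fun i => Complex.zero_le_real.mpr (hp0 i)
  have hterm := fun i => (hA i).trace_kronecker_mul_maxEnt_nonneg_and_le (hB i)
  simp only [Finset.sum_mul, trace_sum, smul_mul_assoc, trace_smul, smul_eq_mul]
  constructor
  · exact Finset.sum_nonneg fun i _ => mul_nonneg (hp0 i) (hterm i).1
  · calc ∑ i, (p i : ℂ) * ((A i ⊗ₖ B i) * maxEnt α).trace
        ≤ ∑ i, (p i : ℂ) * (Fintype.card α : ℂ)⁻¹ :=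
          Finset.sum_le_sum fun i _ => mul_le_mul_of_nonneg_left (hterm i).2 (hp0 i)
      _ = (Fintype.card α : ℂ)⁻¹ := by
          rw [← Finset.sum_mul, ← Complex.ofReal_sum, hp1, Complex.ofReal_one, one_mul]

end MaxEnt

section Kraus

variable {m n d e : Type*} [Fintype n] [Fintype d] [DecidableEq n] [DecidableEq d]

lemma sum_single_mul_mul_single (X : Matrix d d ℂ) :
    ∑ i : n, ∑ j : d, single i j (1 : ℂ) * X * single j i (1 : ℂ) =
      X.trace • (1 : Matrix n n ℂ) := by
  have hdiag : ∀ i : n, ∑ j : d, single i i (X j j) = single i i X.trace :=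
    fun i => (map_sum (singleAddMonoidHom (α := ℂ) i i) _ _).symm
  simp only [single_mul_mul_single, one_mul, mul_one, hdiag, sum_single_eq_diagonal,
    smul_one_eq_diagonal]

def measurePrepareKraus (S : Matrix m n ℂ) (B : Matrix d e ℂ) (t : n × d) : Matrix m e ℂ :=
  S * single t.1 t.2 (1 : ℂ) * B

lemma sum_measurePrepareKraus_mul_mul_conjTranspose [Fintype e] (S : Matrix m n ℂ)
    (B : Matrix d e ℂ) (A : Matrix e e ℂ) :
    ∑ t, measurePrepareKraus S B t * A * (measurePrepareKraus S B t)ᴴ =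
      (B * A * Bᴴ).trace • (S * Sᴴ) := by
  have hconj : ∀ t : n × d, measurePrepareKraus S B t * A * (measurePrepareKraus S B t)ᴴ =
      S * (single t.1 t.2 (1 : ℂ) * (B * A * Bᴴ) * single t.2 t.1 (1 : ℂ)) * Sᴴ := by
    intro t
    simp only [measurePrepareKraus, conjTranspose_mul, conjTranspose_single, star_one,
      Matrix.mul_assoc]
  simp only [hconj, Fintype.sum_prod_type, ← Matrix.sum_mul, ← Matrix.mul_sum,
    sum_single_mul_mul_single, Matrix.mul_smul, Matrix.smul_mul, Matrix.mul_one]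

lemma sum_conjTranspose_measurePrepareKraus_mul [Fintype m] (S : Matrix m n ℂ)
    (B : Matrix d e ℂ) :
    ∑ t, (measurePrepareKraus S B t)ᴴ * measurePrepareKraus S B t =
      (Sᴴ * S).trace • (Bᴴ * B) := by
  have hconj : ∀ t : n × d, (measurePrepareKraus S B t)ᴴ * measurePrepareKraus S B t =
      Bᴴ * (single t.2 t.1 (1 : ℂ) * (Sᴴ * S) * single t.1 t.2 (1 : ℂ)) * B := by
    intro t
    simp only [measurePrepareKraus, conjTranspose_mul, conjTranspose_single, star_one,
      Matrix.mul_assoc]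
  rw [Fintype.sum_prod_type, Finset.sum_comm]
  simp only [hconj, ← Matrix.sum_mul, ← Matrix.mul_sum,
    sum_single_mul_mul_single, Matrix.mul_smul, Matrix.smul_mul, Matrix.mul_one]

end Kraus

lemma trace_mul_mul_conjTranspose_of_idempotent {n : Type*} [Fintype n] {P : Matrix n n ℂ}
    (hP : P.IsHermitian) (hPP : P * P = P) (A : Matrix n n ℂ) :
    (P * A * Pᴴ).trace = (A * P).trace := by
  rw [hP.eq, trace_mul_cycle, hPP, trace_mul_comm]

section Channel

variable {m n : Type*} [Fintype m] [Fintype n] [DecidableEq m] [DecidableEq n]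

lemma isCPTP_of_kraus {ι : Type*} [Fintype ι] (Λ : Matrix n n ℂ →ₗ[ℂ] Matrix m m ℂ)
    (K : ι → Matrix m n ℂ) (hΛ : ∀ X, Λ X = ∑ i, K i * X * (K i)ᴴ)
    (hK : ∑ i, (K i)ᴴ * K i = 1) : IsCPTP Λ := by
  let e := Fintype.equivFin ι
  refine ⟨Fintype.card ι, K ∘ e.symm, fun X => ?_, ?_⟩
  · rw [hΛ, ← e.symm.sum_comp]
    rfl
  · rw [← hK, ← e.symm.sum_comp]
    rfl

lemma isCPTP_measurePrepare {J d : Type*} [Fintype J] [Fintype d] [DecidableEq d]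
    (B : J → Matrix d n ℂ) (hB : ∑ j, (B j)ᴴ * B j = 1) {ρ : J → Matrix m m ℂ}
    (hρ : ∀ j, IsState (ρ j)) (Λ : Matrix n n ℂ →ₗ[ℂ] Matrix m m ℂ)
    (hΛ : ∀ A, Λ A = ∑ j, (B j * A * (B j)ᴴ).trace • ρ j) : IsCPTP Λ := by
  choose S hSρ hStr using fun j => (hρ j).exists_mul_conjTranspose_eq
  refine isCPTP_of_kraus Λ (fun t : J × (m × d) => measurePrepareKraus (S t.1) (B t.1) t.2)
    (fun A => ?_) ?_
  · rw [hΛ, Fintype.sum_prod_type]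
    simp only [sum_measurePrepareKraus_mul_mul_conjTranspose, hSρ]
  · rw [Fintype.sum_prod_type]
    simp only [sum_conjTranspose_measurePrepareKraus_mul, hStr, one_smul, hB]

lemma isCPTP_measurePrepare_projection {P : Matrix n n ℂ} (hP : P.IsHermitian)
    (hPP : P * P = P) {ρ π : Matrix m m ℂ} (hρ : IsState ρ) (hπ : IsState π)
    (Λ : Matrix n n ℂ →ₗ[ℂ] Matrix m m ℂ)
    (hΛ : ∀ A, Λ A = (A * P).trace • ρ + (A * (1 - P)).trace • π) : IsCPTP Λ := by
  have hQ : (1 - P).IsHermitian := isHermitian_one.sub hP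
  have hQQ : (1 - P) * (1 - P) = 1 - P := by
    rw [Matrix.mul_sub, Matrix.mul_one, Matrix.sub_mul, Matrix.one_mul, hPP, sub_self, sub_zero]
  refine isCPTP_measurePrepare ![P, 1 - P] ?_ (ρ := ![ρ, π])
    (Fin.forall_fin_two.mpr ⟨hρ, hπ⟩) Λ fun A => ?_
  · simp [Fin.sum_univ_two, hP.eq, hQ.eq, hPP, hQQ]
  · simp only [hΛ, Fin.sum_univ_two, Matrix.cons_val_zero, Matrix.cons_val_one,
      trace_mul_mul_conjTranspose_of_idempotent hP hPP,
      trace_mul_mul_conjTranspose_of_idempotent hQ hQQ]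

end Channel

lemma IsState.real_smul_add_smul {n : Type*} [Fintype n] {ρ π : Matrix n n ℂ} (hρ : IsState ρ)
    (hπ : IsState π) {a b : ℝ} (ha : 0 ≤ a) (hb : 0 ≤ b) (hab : a + b = 1) :
    IsState ((a : ℂ) • ρ + (b : ℂ) • π) := by
  refine ⟨(hρ.1.smul (Complex.zero_le_real.mpr ha)).add
    (hπ.1.smul (Complex.zero_le_real.mpr hb)), ?_⟩
  rw [trace_add, trace_smul, trace_smul, hρ.2, hπ.2, smul_eq_mul, smul_eq_mul, mul_one, mul_one,
    ← Complex.ofReal_add, hab, Complex.ofReal_one]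

section Robustness

variable {α β : Type*} [Fintype α] [Fintype β]

lemma RG_le {ρ π : Matrix (α × β) (α × β) ℂ} {s : ℝ} (hs : 0 ≤ s) (hπ : IsState π)
    (hsep : SepState ((((1 + s)⁻¹ : ℝ) : ℂ) • (ρ + (s : ℂ) • π))) : RG ρ ≤ s :=
  csInf_le ⟨0, fun _ hx => hx.1⟩ ⟨hs, π, hπ, hsep⟩

lemma RG_real_smul_add_smul_le {ρ π : Matrix (α × β) (α × β) ℂ} (hρ : IsState ρ)
    (hπ : IsState π) {k : ℝ} (hk : 1 < k)
    (hsep : SepState (((k⁻¹ : ℝ) : ℂ) • (ρ + ((k - 1 : ℝ) : ℂ) • π)))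
    {r : ℝ} (hr0 : 0 ≤ r) (hr : r ≤ (k - 1)⁻¹) :
    RG ((r : ℂ) • ρ + ((1 - r : ℝ) : ℂ) • π) ≤ 1 / (k - 1) := by
  have hk1 : 0 < k - 1 := sub_pos.mpr hk
  have hr' : (k - 1) * r ≤ 1 := (le_div_iff₀' hk1).mp (by rwa [one_div])
  -- The witness is `(1 - (k - 1) r) ρ + (k - 1) r π`: mixing it into `r ρ + (1 - r) π` with
  -- weight `1 / (k - 1)` gives back `(ρ + (k - 1) π) / k`.
  refine RG_le (by positivity) ((hρ.real_smul_add_smul hπ (sub_nonneg.mpr hr')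
    (mul_nonneg hk1.le hr0) (sub_add_cancel _ _))) ?_
  convert hsep using 1
  have hk0 : (k : ℂ) ≠ 0 := Complex.ofReal_ne_zero.mpr (by linarith)
  have hk1' : (k : ℂ) - 1 ≠ 0 := by exact_mod_cast hk1.ne'
  have hinv : (1 + 1 / (k - 1))⁻¹ = (k - 1) / k := by
    field_simp
    ring
  rw [hinv]
  push_cast
  match_scalars <;> field_simp <;> ring

end Robustness

/-- the measure-and-prepare map Λ(A) = tr(AΦ(K))ρ + tr(A(Id−Φ(K)))π is
CPTP and 1/(K−1)-non-entangling, given (ρ + (K−1)π)/K separable. -/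
theorem stmt_9 {α β : Type*} [Fintype α] [DecidableEq α] [Fintype β] [DecidableEq β]
    (K : ℕ) (hK : 2 ≤ K)
    (ρ π : Matrix (α × β) (α × β) ℂ) (hρ : IsState ρ) (hπ : IsState π)
    (hsep : SepState ((((K : ℝ)⁻¹ : ℝ) : ℂ) • (ρ + (((K : ℝ) - 1 : ℝ) : ℂ) • π)))
    (Λ : Matrix (Fin K × Fin K) (Fin K × Fin K) ℂ →ₗ[ℂ] Matrix (α × β) (α × β) ℂ)
    (hΛ : ∀ A, Λ A = (A * maxEnt (Fin K)).trace • ρ + (A * (1 - maxEnt (Fin K))).trace • π) :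
    IsCPTP Λ ∧ ∀ σ, IsState σ → SepState σ → RG (Λ σ) ≤ 1 / ((K : ℝ) - 1) := by
  refine ⟨isCPTP_measurePrepare_projection (maxEnt_isHermitian _) (maxEnt_mul_self _) hρ hπ
    Λ hΛ, fun σ hσ hσsep => ?_⟩
  obtain ⟨h0, h1⟩ := hσsep.trace_mul_maxEnt_nonneg_and_le
  set r := (σ * maxEnt (Fin K)).trace.re
  have hr : (σ * maxEnt (Fin K)).trace = r :=
    Complex.eq_re_of_ofReal_le (r := 0) (by rwa [Complex.ofReal_zero])
  have hr0 : 0 ≤ r := (Complex.nonneg_iff.mp h0).1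
  have hK1 : (1 : ℝ) < K := by exact_mod_cast hK
  have hΛσ : Λ σ = (r : ℂ) • ρ + ((1 - r : ℝ) : ℂ) • π := by
    rw [hΛ, Matrix.mul_sub, Matrix.mul_one, trace_sub, hσ.2, hr, Complex.ofReal_sub,
      Complex.ofReal_one]
  have hrK : r ≤ (K : ℝ)⁻¹ := by
    rwa [hr, Fintype.card_fin, ← Complex.ofReal_natCast, ← Complex.ofReal_inv,
      Complex.real_le_real] at h1
  rw [hΛσ]
  exact RG_real_smul_add_smul_le hρ hπ hK1 hsep hr0
    (hrK.trans (inv_anti₀ (by linarith) (by linarith)))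

end
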